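/- (Theorem 1) Let L̂ ∈ ℝ^{n×n}, H ∈ ℝ^{n×d}, P ∈ ℝ^{d×d'} be real matrices with n ≥ 1, K a natural number, e ∈ ℝ^n, δ ∈ ℝ^d, and u ∈ ℝ^{d'}. Let l = uᵀ s(H) be the classification score, where s(H) = (1/n) Σ_{i=1}^n (L̂^K H P)_i, and let Δl = ((𝟏ᵀ L̂^K e) · (δᵀ P u)) / n be its change under the single-node perturbation H' = H + e δᵀ. Assume 𝟏ᵀ L̂^K e > 0 and ‖P u‖₂ > 0. If the perturbation flips the prediction with larger magnitude, i.e., |Δl| > |l|, then necessarily ‖δ‖₂ > n · |l| / ((𝟏ᵀ L̂^K e) · ‖P u‖₂). -/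

import Mathlib

open Matrix

/-! The score change factors as `Δl = (𝟏ᵀ L̂^K e) (δᵀ P u) / n`, so `|Δl| > |l|` gives
`n |l| < (𝟏ᵀ L̂^K e) |⟨δ, P u⟩|`, and Cauchy–Schwarz bounds `|⟨δ, P u⟩|` by `‖δ‖₂ ‖P u‖₂`. -/

lemma abs_dotProduct_le_sqrt_mul_sqrt {ι : Type*} [Fintype ι] (v w : ι → ℝ) :
    |v ⬝ᵥ w| ≤ Real.sqrt (∑ i, v i ^ 2) * Real.sqrt (∑ i, w i ^ 2) := by
  rw [← Real.sqrt_sq_eq_abs, ← Real.sqrt_mul (Finset.sum_nonneg fun i _ => sq_nonneg _)]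
  exact Real.sqrt_le_sqrt (Finset.sum_mul_sq_le_sq_mul_sq _ v w)

lemma abs_mul_abs_lt_of_abs_lt_abs_div {x y n : ℝ} (h : |x| < |y / n|) : |n| * |x| < |y| := by
  rcases eq_or_ne n 0 with rfl | hn
  · simp only [div_zero, abs_zero] at h
    exact absurd h (abs_nonneg x).not_gt
  · rw [abs_div, lt_div_iff₀ (abs_pos.mpr hn)] at h
    linarith

lemma lt_of_abs_lt_abs_mul_dotProduct_div {ι : Type*} [Fintype ι] {c n l : ℝ} {v w : ι → ℝ}
    (hc : 0 < c) (hw : 0 < Real.sqrt (∑ i, w i ^ 2)) (h : |l| < |c * (v ⬝ᵥ w) / n|) :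
    n * |l| / (c * Real.sqrt (∑ i, w i ^ 2)) < Real.sqrt (∑ i, v i ^ 2) := by
  rw [div_lt_iff₀ (mul_pos hc hw)]
  calc n * |l| ≤ |n| * |l| := mul_le_mul_of_nonneg_right (le_abs_self n) (abs_nonneg l)
    _ < |c * (v ⬝ᵥ w)| := abs_mul_abs_lt_of_abs_lt_abs_div h
    _ = c * |v ⬝ᵥ w| := by rw [abs_mul, abs_of_pos hc]
    _ ≤ c * (Real.sqrt (∑ i, v i ^ 2) * Real.sqrt (∑ i, w i ^ 2)) :=
      mul_le_mul_of_nonneg_left (abs_dotProduct_le_sqrt_mul_sqrt v w) hc.le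
    _ = Real.sqrt (∑ i, v i ^ 2) * (c * Real.sqrt (∑ i, w i ^ 2)) := by ring

theorem gcn_discriminative_norm_bound_general
    {n d d' : ℕ} (L : Matrix (Fin n) (Fin n) ℝ)
    (H : Matrix (Fin n) (Fin d) ℝ) (P : Matrix (Fin d) (Fin d') ℝ)
    (K : ℕ) (e : Fin n → ℝ) (δ : Fin d → ℝ) (u : Fin d' → ℝ)
    (hc : 0 < ∑ i, ((L ^ K).mulVec e) i)
    (hPu : 0 < Real.sqrt (∑ j, (P.mulVec u j) ^ 2))
    (hflip :
      |((∑ i, ((L ^ K).mulVec e) i) * (δ ⬝ᵥ P.mulVec u)) / (n : ℝ)|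
        > |u ⬝ᵥ fun j => (1 / (n : ℝ)) * ∑ i, (L ^ K * H * P) i j|) :
    Real.sqrt (∑ i, (δ i) ^ 2)
      > (n : ℝ) * |u ⬝ᵥ fun j => (1 / (n : ℝ)) * ∑ i, (L ^ K * H * P) i j|
          / ((∑ i, ((L ^ K).mulVec e) i)
              * Real.sqrt (∑ j, (P.mulVec u j) ^ 2)) :=
  lt_of_abs_lt_abs_mul_dotProduct_div hc hPu hflip

/-- Theorem 1: if the single-node perturbation `H' = H + e δᵀ` flips the
prediction with larger magnitude, i.e. `|Δl| > |l|` where `l = uᵀ s(H)` and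
`Δl = ((𝟏ᵀ L̂^K e)(δᵀ P u)) / n`, and `𝟏ᵀ L̂^K e > 0`, `‖P u‖₂ > 0`,
then necessarily `‖δ‖₂ > n |l| / ((𝟏ᵀ L̂^K e) ‖P u‖₂)`. -/
theorem gcn_discriminative_norm_bound
    {n d d' : ℕ} (hn : 1 ≤ n) (L : Matrix (Fin n) (Fin n) ℝ)
    (H : Matrix (Fin n) (Fin d) ℝ) (P : Matrix (Fin d) (Fin d') ℝ)
    (K : ℕ) (e : Fin n → ℝ) (δ : Fin d → ℝ) (u : Fin d' → ℝ)
    (hc : 0 < ∑ i, ((L ^ K).mulVec e) i)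
    (hPu : 0 < Real.sqrt (∑ j, (P.mulVec u j) ^ 2))
    (hflip :
      |((∑ i, ((L ^ K).mulVec e) i) * (δ ⬝ᵥ P.mulVec u)) / (n : ℝ)|
        > |u ⬝ᵥ fun j => (1 / (n : ℝ)) * ∑ i, (L ^ K * H * P) i j|) :
    Real.sqrt (∑ i, (δ i) ^ 2)
      > (n : ℝ) * |u ⬝ᵥ fun j => (1 / (n : ℝ)) * ∑ i, (L ^ K * H * P) i j|
          / ((∑ i, ((L ^ K).mulVec e) i)
              * Real.sqrt (∑ j, (P.mulVec u j) ^ 2)) :=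
  gcn_discriminative_norm_bound_general L H P K e δ u hc hPu hflip
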